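/- Let F be a presheaf of sets on complex manifolds with the property that for every complex manifold U the projection U × ℂ → U induces a bijection F(U) → F(U × ℂ). Then every element of F(ℙ¹) is 'constant': the restriction map F(pt) → F(ℙ¹) induced by ℙ¹ → pt is surjective, provided F satisfies the sheaf gluing condition for the open cover of ℙ¹ by its two standard affine charts. -/
import Mathlib


open CategoryTheory

/-- Let `F` be a sheaf of sets on the site of complex manifolds such that for every `U`
the projection `U × ℂ → U` induces a bijection `F(U) → F(U × ℂ)`.  Then every section of
`F` over `ℙ¹` is constant, i.e. the map `F(pt) → F(ℙ¹)` is surjective.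

We formalize the situation categorically: in a category `C` (of complex manifolds) we are
given objects `pt`, `P = ℙ¹`, `U0 = ℙ¹∖{0}`, `U1 = ℙ¹∖{∞}`, `U01 = U0 ∩ U1`, with the
inclusions `i0 : U01 ⟶ U0`, `i1 : U01 ⟶ U1`, `p0 : U0 ⟶ P`, `p1 : U1 ⟶ P`, the terminal
maps `t• : • ⟶ pt` and a point `z : pt ⟶ U01` of `U0 ∩ U1`.  The `ℂ`-invariance
hypothesis, applied to the charts `U0 ≅ ℂ ≅ U1`, says that `F(t0)` and `F(t1)` are
bijective, and the sheaf condition for the open cover `{U0, U1}` of `ℙ¹` says that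
compatible sections over `U0` and `U1` glue uniquely over `P`.  The conclusion is that
`F(tP) : F(pt) → F(P)` is surjective. -/
theorem sections_over_P1_are_constant
    {C : Type*} [Category C] (F : Cᵒᵖ ⥤ Type*)
    (pt P U0 U1 U01 : C)
    (tP : P ⟶ pt) (t0 : U0 ⟶ pt) (t1 : U1 ⟶ pt) (t01 : U01 ⟶ pt)
    (p0 : U0 ⟶ P) (p1 : U1 ⟶ P) (i0 : U01 ⟶ U0) (i1 : U01 ⟶ U1)
    (z : pt ⟶ U01)
    (hsquare : i0 ≫ p0 = i1 ≫ p1)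
    (ht0 : p0 ≫ tP = t0) (ht1 : p1 ≫ tP = t1)
    (ht01₀ : i0 ≫ t0 = t01) (ht01₁ : i1 ≫ t1 = t01)
    (hz : z ≫ t01 = 𝟙 pt)
    -- `ℂ`-invariance of `F` applied to `U0 ≅ ℂ` and `U1 ≅ ℂ`:
    (hb0 : Function.Bijective (F.map t0.op))
    (hb1 : Function.Bijective (F.map t1.op))
    -- the sheaf condition for the open cover `{U0, U1}` of `ℙ¹`:
    (hsheaf : ∀ (x0 : F.obj (Opposite.op U0)) (x1 : F.obj (Opposite.op U1)),
      F.map i0.op x0 = F.map i1.op x1 →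
      ∃! x : F.obj (Opposite.op P), F.map p0.op x = x0 ∧ F.map p1.op x = x1) :
    Function.Surjective (F.map tP.op) := by
  intro x
  obtain ⟨s0, hs0⟩ := hb0.surjective (F.map p0.op x)
  obtain ⟨s1, hs1⟩ := hb1.surjective (F.map p1.op x)
  have hmap : ∀ {X Y Z : C} (f : X ⟶ Y) (g : Y ⟶ Z) (a : F.obj (Opposite.op Z)),
      F.map f.op (F.map g.op a) = F.map (f ≫ g).op a := by
    intro X Y Z f g a
    have : (f ≫ g).op = g.op ≫ f.op := rfl
    rw [this, F.map_comp]; rfl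
  have hcomp : F.map i0.op (F.map p0.op x) = F.map i1.op (F.map p1.op x) := by
    rw [hmap, hmap, hsquare]
  have h0 : F.map i0.op (F.map p0.op x) = F.map t01.op s0 := by
    rw [← hs0, hmap, ht01₀]
  have h1 : F.map i1.op (F.map p1.op x) = F.map t01.op s1 := by
    rw [← hs1, hmap, ht01₁]
  have hss : s0 = s1 := by
    have := congrArg (F.map z.op) (h0.symm.trans (hcomp.trans h1))
    rw [hmap, hmap, hz] at this
    simpa using this
  refine ⟨s0, ?_⟩
  obtain ⟨y, hy, huniq⟩ := hsheaf (F.map p0.op x) (F.map p1.op x) hcomp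
  have hx : x = y := huniq x ⟨rfl, rfl⟩
  have hFt : F.map (tP.op) s0 = y := by
    refine huniq _ ⟨?_, ?_⟩
    · rw [hmap, ht0, hs0]
    · rw [hmap, ht1, hss, hs1]
  rw [hFt, hx]
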